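/- arXiv:2409.20401 — 3 statements merged into one kernel-verified Lean document; each statement's English description precedes it below -/
import Mathlib

section
/- Let w ∈ L¹(a,b) and ξ ∈ (a,b) be such that (1/|h|)∫_ξ^{ξ+h} w(t) dt → +∞ as h → 0. Then for every ε > 0 there exist x⁻ ∈ (ξ-ε, ξ) and x⁺ ∈ (ξ, ξ+ε) such that ∫_{x⁻}^{x⁺} w(t) dt = 0. -/
open intervalIntegral Set

/-- If `w ∈ L¹(a,b)` and at `ξ ∈ (a,b)` the averages `(1/|h|)∫_ξ^{ξ+h} w` tend to `+∞`
as `h → 0`, then for every `ε > 0` there are `x⁻ ∈ (ξ-ε,ξ)` and `x⁺ ∈ (ξ,ξ+ε)` with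
`∫_{x⁻}^{x⁺} w = 0`. -/
theorem stmt0 (a b ξ : ℝ) (w : ℝ → ℝ)
    (hw : MeasureTheory.IntegrableOn w (Set.Ioo a b))
    (hξ : ξ ∈ Set.Ioo a b)
    (hdiv : ∀ M : ℝ, ∃ δ > 0, ∀ h : ℝ, h ≠ 0 → |h| < δ →
      (∫ t in ξ..(ξ + h), w t) / |h| ≥ M) :
    ∀ ε > 0, ∃ xm ∈ Set.Ioo (ξ - ε) ξ, ∃ xp ∈ Set.Ioo ξ (ξ + ε),
      (∫ t in xm..xp, w t) = 0 := by
  intro ε hε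
  obtain ⟨δ, hδ, hM⟩ := hdiv 1
  obtain ⟨ha, hb⟩ := hξ
  set r : ℝ := min (min δ ε) (min (ξ - a) (b - ξ)) / 2 with hr_def
  have hr : 0 < r := by
    apply div_pos _ two_pos
    exact lt_min (lt_min hδ hε) (lt_min (by linarith) (by linarith))
  have hrδ : r < δ := by
    have : r ≤ min δ ε / 2 := by
      apply div_le_div_of_nonneg_right (min_le_left _ _) (by norm_num : (0:ℝ) ≤ 2)
    have h2 : min δ ε ≤ δ := min_le_left _ _
    linarith
  have hrε : r < ε := by
    have : r ≤ min δ ε / 2 := by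
      apply div_le_div_of_nonneg_right (min_le_left _ _) (by norm_num : (0:ℝ) ≤ 2)
    have h2 : min δ ε ≤ ε := min_le_right _ _
    linarith
  have hra : r < ξ - a := by
    have : r ≤ min (ξ - a) (b - ξ) / 2 := by
      apply div_le_div_of_nonneg_right (min_le_right _ _) (by norm_num : (0:ℝ) ≤ 2)
    have h2 : min (ξ - a) (b - ξ) ≤ ξ - a := min_le_left _ _
    linarith
  have hrb : r < b - ξ := by
    have : r ≤ min (ξ - a) (b - ξ) / 2 := by
      apply div_le_div_of_nonneg_right (min_le_right _ _) (by norm_num : (0:ℝ) ≤ 2)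
    have h2 : min (ξ - a) (b - ξ) ≤ b - ξ := min_le_right _ _
    linarith
  set u : ℝ := ξ - r
  set v : ℝ := ξ + r
  have huv : Icc u v ⊆ Ioo a b := fun x hx =>
    ⟨by simp only [u] at hx; cases hx; linarith, by simp only [v] at hx; cases hx; linarith⟩
  have hwint : MeasureTheory.IntegrableOn w (Icc u v) := hw.mono_set huv
  have hii : IntervalIntegrable w MeasureTheory.volume u v := by
    rw [intervalIntegrable_iff_integrableOn_Icc_of_le (by simp only [u, v]; linarith)]
    exact hwint
  set F : ℝ → ℝ := fun x => ∫ t in ξ..x, w t with hF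
  have hξuv : ξ ∈ uIcc u v := by
    rw [uIcc_of_le (by simp only [u, v]; linarith)]
    exact ⟨by simp only [u]; linarith, by simp only [v]; linarith⟩
  have hFcont : ContinuousOn F (uIcc u v) :=
    continuousOn_primitive_interval' hii hξuv
  have hFcont' : ContinuousOn F (Icc u v) := by
    rwa [uIcc_of_le (by simp only [u, v]; linarith)] at hFcont
  -- F(u) ≥ r and F(v) ≥ r
  have hFu : F u ≥ r := by
    have := hM (-r) (neg_ne_zero.mpr hr.ne') (by rw [abs_neg, abs_of_pos hr]; exact hrδ)
    rw [abs_neg, abs_of_pos hr] at this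
    have h1 : ξ + -r = u := by simp only [u]; ring
    rw [h1] at this
    have := (le_div_iff₀ hr).mp this
    simpa [hF] using by linarith
  have hFv : F v ≥ r := by
    have := hM r (ne_of_gt hr) (by rw [abs_of_pos hr]; exact hrδ)
    rw [abs_of_pos hr] at this
    have := (le_div_iff₀ hr).mp this
    simpa [hF, v] using by linarith
  have hFξ : F ξ = 0 := by simp [hF]
  set c : ℝ := min (F u) (F v) / 2 with hc
  have hc0 : 0 < c := by
    apply div_pos _ two_pos
    exact lt_min (lt_of_lt_of_le hr hFu) (lt_of_lt_of_le hr hFv)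
  have hcu : c < F u := by
    have : c ≤ F u / 2 := div_le_div_of_nonneg_right (min_le_left _ _) (by norm_num : (0:ℝ) ≤ 2)
    linarith [lt_of_lt_of_le hr hFu]
  have hcv : c < F v := by
    have : c ≤ F v / 2 := div_le_div_of_nonneg_right (min_le_right _ _) (by norm_num : (0:ℝ) ≤ 2)
    linarith [lt_of_lt_of_le hr hFv]
  -- IVT on [u, ξ]: F u > c > 0 = F ξ
  have huξ : u ≤ ξ := by simp only [u]; linarith
  have hξv : ξ ≤ v := by simp only [v]; linarith
  have hsub1 : Icc u ξ ⊆ Icc u v := Icc_subset_Icc le_rfl hξv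
  have hsub2 : Icc ξ v ⊆ Icc u v := Icc_subset_Icc huξ le_rfl
  obtain ⟨xm, hxm, hFxm⟩ : ∃ xm ∈ Ioo u ξ, F xm = c := by
    have := intermediate_value_Ioo' huξ (hFcont'.mono hsub1)
    have hmem : c ∈ Ioo (F ξ) (F u) := ⟨by rw [hFξ]; exact hc0, hcu⟩
    obtain ⟨x, hx, hfx⟩ := this hmem
    exact ⟨x, hx, hfx⟩
  obtain ⟨xp, hxp, hFxp⟩ : ∃ xp ∈ Ioo ξ v, F xp = c := by
    have := intermediate_value_Ioo hξv (hFcont'.mono hsub2)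
    have hmem : c ∈ Ioo (F ξ) (F v) := ⟨by rw [hFξ]; exact hc0, hcv⟩
    obtain ⟨x, hx, hfx⟩ := this hmem
    exact ⟨x, hx, hfx⟩
  refine ⟨xm, ⟨by cases hxm; simp only [u] at *; linarith, hxm.2⟩,
    xp, ⟨hxp.1, by cases hxp; simp only [v] at *; linarith⟩, ?_⟩
  have h1 : IntervalIntegrable w MeasureTheory.volume xm ξ := by
    apply hii.mono_set
    rw [uIcc_of_le (le_of_lt hxm.2), uIcc_of_le (by simp only [u, v]; linarith : u ≤ v)]
    exact Icc_subset_Icc (le_of_lt hxm.1) hξv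
  have h2 : IntervalIntegrable w MeasureTheory.volume ξ xp := by
    apply hii.mono_set
    rw [uIcc_of_le (le_of_lt hxp.1), uIcc_of_le (by simp only [u, v]; linarith : u ≤ v)]
    exact Icc_subset_Icc huξ (le_of_lt hxp.2)
  have : (∫ t in xm..ξ, w t) + (∫ t in ξ..xp, w t) = ∫ t in xm..xp, w t :=
    integral_add_adjacent_intervals h1 h2
  have hFxm' : (∫ t in xm..ξ, w t) = -c := by
    rw [← hFxm]; simp only [hF]; rw [integral_symm]
  rw [← this, hFxm']
  simp only [hF] at hFxp
  rw [hFxp]; ring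
end

section
/- Let w ∈ L¹(a,b) and ξ ∈ (a,b) be such that (1/|h|)∫_ξ^{ξ+h} w(t) dt → +∞ as h → 0. Then w is not of bounded mean oscillation on (a,b); that is, sup over subintervals I of (1/|I|)∫_I |w - w_I| is infinite, where w_I = (1/|I|)∫_I w. -/
/-!
Replacing `w` by `w - m` changes `∫_ξ^{ξ+h} w` and `∫_ξ^{ξ-h} w` by opposite amounts, so
`∫_{ξ-h}^{ξ+h} |w - m|` dominates their sum for every constant `m`, in particular for the mean
of `w` over `[ξ-h, ξ+h]`. By the divergence hypothesis this sum exceeds `2Mh` for small `h > 0`,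
so the mean oscillation over `[ξ-h, ξ+h]` is at least `M`, for every `M`.
-/

open intervalIntegral Set
open MeasureTheory (volume)

/-- Since `|w - m| ≥ w - m` on `[ξ, d]` and `|w - m| ≥ m - w` on `[c, ξ]`. -/
theorem integral_sub_integral_le_integral_abs_sub {w : ℝ → ℝ} {c ξ d : ℝ}
    (hcξ : c ≤ ξ) (hξd : ξ ≤ d) (hw : IntervalIntegrable w volume c d) (m : ℝ) :
    (∫ t in ξ..d, w t) - (∫ t in c..ξ, w t) - m * ((d - ξ) - (ξ - c)) ≤
      ∫ t in c..d, |w t - m| := by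
  have hwl : IntervalIntegrable w volume c ξ :=
    hw.mono_set (uIcc_subset_uIcc left_mem_uIcc (mem_uIcc_of_le hcξ hξd))
  have hwr : IntervalIntegrable w volume ξ d :=
    hw.mono_set (uIcc_subset_uIcc (mem_uIcc_of_le hcξ hξd) right_mem_uIcc)
  have hleft : ∫ t in c..ξ, -(w t - m) ≤ ∫ t in c..ξ, |w t - m| :=
    integral_mono_on hcξ (hwl.sub intervalIntegrable_const).neg
      (hwl.sub intervalIntegrable_const).abs fun t _ => neg_le_abs _
  have hright : ∫ t in ξ..d, (w t - m) ≤ ∫ t in ξ..d, |w t - m| :=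
    integral_mono_on hξd (hwr.sub intervalIntegrable_const)
      (hwr.sub intervalIntegrable_const).abs fun t _ => le_abs_self _
  rw [integral_neg, integral_sub hwl intervalIntegrable_const, integral_const] at hleft
  rw [integral_sub hwr intervalIntegrable_const, integral_const] at hright
  rw [← integral_add_adjacent_intervals (hwl.sub intervalIntegrable_const).abs
    (hwr.sub intervalIntegrable_const).abs]
  simp only [smul_eq_mul] at hleft hright
  linarith

theorem integral_add_integral_le_integral_abs_sub {w : ℝ → ℝ} {ξ h : ℝ} (hh : 0 ≤ h)
    (hw : IntervalIntegrable w volume (ξ - h) (ξ + h)) (m : ℝ) :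
    (∫ t in ξ..ξ + h, w t) + (∫ t in ξ..ξ - h, w t) ≤
      ∫ t in ξ - h..ξ + h, |w t - m| := by
  have hsplit :=
    integral_sub_integral_le_integral_abs_sub (ξ := ξ) (by linarith) (by linarith) hw m
  rw [integral_symm (ξ - h)]
  linarith

/-- If `w ∈ L¹(a,b)` has a type-A singularity at `ξ ∈ (a,b)` (the symmetric averages
diverge to `+∞`), then `w` is not of bounded mean oscillation on `(a,b)`: there is no
uniform bound on the mean oscillation of `w` over subintervals `[c,d] ⊆ (a,b)`. -/
theorem stmt1 (a b ξ : ℝ) (w : ℝ → ℝ)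
    (hw : MeasureTheory.IntegrableOn w (Set.Ioo a b))
    (hξ : ξ ∈ Set.Ioo a b)
    (hdiv : ∀ M : ℝ, ∃ δ > 0, ∀ h : ℝ, h ≠ 0 → |h| < δ →
      (∫ t in ξ..(ξ + h), w t) / |h| ≥ M) :
    ¬ ∃ C : ℝ, ∀ c d : ℝ, a < c → c < d → d < b →
      (∫ t in c..d, |w t - (∫ s in c..d, w s) / (d - c)|) / (d - c) ≤ C := by
  rintro ⟨C, hC⟩
  obtain ⟨δ, hδ, hM⟩ := hdiv (C + 1)
  obtain ⟨h, hh, hhmin⟩ :=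
    exists_between (lt_min hδ (lt_min (sub_pos.2 hξ.1) (sub_pos.2 hξ.2)))
  obtain ⟨hhδ, hha, hhb⟩ := lt_min_iff.1 hhmin |>.imp_right lt_min_iff.1
  have hright := hM h hh.ne' (by rwa [abs_of_pos hh])
  have hleft := hM (-h) (neg_ne_zero.2 hh.ne') (by rwa [abs_neg, abs_of_pos hh])
  rw [abs_neg, abs_of_pos hh, ← sub_eq_add_neg, ge_iff_le, le_div_iff₀ hh] at hleft
  rw [abs_of_pos hh, ge_iff_le, le_div_iff₀ hh] at hright
  have hwξ : IntervalIntegrable w volume (ξ - h) (ξ + h) :=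
    (intervalIntegrable_iff_integrableOn_Icc_of_le (by linarith)).2
      (hw.mono_set (Icc_subset_Ioo (by linarith) (by linarith)))
  have hosc := integral_add_integral_le_integral_abs_sub hh.le hwξ
    ((∫ s in ξ - h..ξ + h, w s) / (ξ + h - (ξ - h)))
  have hbound := hC (ξ - h) (ξ + h) (by linarith) (by linarith) (by linarith)
  rw [div_le_iff₀ (by linarith)] at hbound
  linarith
end

section
/- For α ∈ (0,1] and x irrational in the domain of A_α, set β_{α,n} := ∏_{i=0}^n A_α^i(x). Assuming q_{α,n+1} > q_{α,n} > 0 for all n, and that ε_{α,n+1} x_{α,n+1} ∈ [α−1, α), one has 1/(1+α) < β_{α,n} · q_{α,n+1} < 1/α for all n ≥ 0. -/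
noncomputable section

/-- `ᾱ = max(α, 1-α)`. -/
def abar (α : ℝ) : ℝ := max α (1 - α)

/-- The Nakada `α`-continued fraction map `A_α(x) = |1/x − ⌊1/x + 1 − α⌋|`. -/
def Amap (α x : ℝ) : ℝ := |1 / x - ⌊1 / x + 1 - α⌋|

/-- The orbit `x_{α,n} = A_α^n(x)`. -/
def xseq (α x : ℝ) (n : ℕ) : ℝ := (Amap α)^[n] x

/-- The partial quotients `a_{α,n}`. -/
def dig (α x : ℝ) : ℕ → ℤ
  | 0 => ⌊x + 1 - abar α⌋
  | n + 1 => ⌊1 / xseq α x n + 1 - α⌋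

/-- The signs `ε_{α,n} ∈ {±1}`. -/
def sgn (α x : ℝ) : ℕ → ℝ
  | 0 => Real.sign (x - ⌊x + 1 - abar α⌋)
  | n + 1 => Real.sign (1 / xseq α x n - ⌊1 / xseq α x n + 1 - α⌋)

/-- The matrix products defining the convergents:
`M_n = (1, a₀; 0, 1) · ∏_{k=1}^n (0, ε_{k−1}; 1, a_k)`. -/
def Mmat (α x : ℝ) : ℕ → Matrix (Fin 2) (Fin 2) ℝ
  | 0 => !![1, (dig α x 0 : ℝ); 0, 1]
  | n + 1 => Mmat α x n * !![0, sgn α x n; 1, (dig α x (n + 1) : ℝ)]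

/-- Numerator `p_{α,n}` of the `n`th convergent. -/
def pconv (α x : ℝ) (n : ℕ) : ℝ := Mmat α x n 0 1

/-- Denominator `q_{α,n}` of the `n`th convergent. -/
def qconv (α x : ℝ) (n : ℕ) : ℝ := Mmat α x n 1 1

/-- `β_{α,n} = ∏_{i=0}^n A_α^i(x)`. -/
def betaseq (α x : ℝ) (n : ℕ) : ℝ := ∏ i ∈ Finset.range (n + 1), xseq α x i

/-! The denominators `D_n = q_{n+1} + q_n ε_{n+1} x_{n+1}` satisfy `x_{n+1} D_{n+1} = D_n` and
`x_0 D_0 = 1`, because the partial quotient cancels against `1/x_n − a_{n+1}`; hence `β_n D_n = 1`.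
Since `0 < q_n < q_{n+1}` and `ε_{n+1} x_{n+1} ∈ [α − 1, α)` is nonzero (irrationality), one has
`α q_{n+1} < D_n < (1 + α) q_{n+1}`, which is the claim for `β_n q_{n+1} = q_{n+1} / D_n`. -/

lemma Real.sign_mul_abs (t : ℝ) : Real.sign t * |t| = t := by
  rcases lt_trichotomy t 0 with h | rfl | h
  · rw [Real.sign_of_neg h, abs_of_neg h]; ring
  · simp
  · rw [Real.sign_of_pos h, abs_of_pos h]; ring

lemma Irrational.abs {t : ℝ} (h : Irrational t) : Irrational |t| := by
  rcases abs_choice t with h' | h' <;> rw [h']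
  exacts [h, h.neg]

section ContinuedFraction

variable (α x : ℝ)

lemma xseq_succ (n : ℕ) : xseq α x (n + 1) = |1 / xseq α x n - dig α x (n + 1)| :=
  Function.iterate_succ_apply' _ _ _

lemma sgn_mul_xseq_succ (n : ℕ) :
    sgn α x (n + 1) * xseq α x (n + 1) = 1 / xseq α x n - dig α x (n + 1) := by
  rw [xseq_succ]
  exact Real.sign_mul_abs _

variable {α x}

lemma Irrational.one_div_sub_intCast {t : ℝ} (h : Irrational t) (m : ℤ) :
    Irrational (1 / t - m) := by
  simpa only [one_div] using h.inv.sub_intCast m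

lemma Irrational.xseq (hx : Irrational x) (n : ℕ) : Irrational (xseq α x n) := by
  induction n with
  | zero => exact hx
  | succ n ih => rw [xseq_succ]; exact (ih.one_div_sub_intCast _).abs

variable (α x)

lemma qconv_succ (n : ℕ) :
    qconv α x (n + 1) = Mmat α x n 1 0 * sgn α x n + qconv α x n * dig α x (n + 1) := by
  simp [qconv, Mmat, Matrix.mul_apply, Fin.sum_univ_two]

-- `Mmat α x n 1 0` is `q_{n-1}`, with `q_{-1} = 0`.
lemma qconv_succ_add_qconv_mul_sgn_mul_xseq (n : ℕ) :
    qconv α x (n + 1) + qconv α x n * (sgn α x (n + 1) * xseq α x (n + 1))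
      = Mmat α x n 1 0 * sgn α x n + qconv α x n / xseq α x n := by
  rw [sgn_mul_xseq_succ, qconv_succ]
  ring

variable {α x}

theorem betaseq_mul_eq_one (hx : Irrational x) (n : ℕ) :
    betaseq α x n * (qconv α x (n + 1) + qconv α x n * (sgn α x (n + 1) * xseq α x (n + 1)))
      = 1 := by
  rw [qconv_succ_add_qconv_mul_sgn_mul_xseq]
  induction n with
  | zero =>
    have hx0 := (hx.xseq (α := α) 0).ne_zero
    simp [betaseq, Mmat, qconv, hx0]
  | succ n ih =>
    have hxn := (hx.xseq (α := α) (n + 1)).ne_zero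
    have hMmat : Mmat α x (n + 1) 1 0 = qconv α x n := by
      simp [Mmat, qconv, Matrix.mul_apply, Fin.sum_univ_two]
    rw [← qconv_succ_add_qconv_mul_sgn_mul_xseq] at ih
    rw [betaseq, Finset.prod_range_succ, ← betaseq, hMmat, ← ih]
    field_simp
    ring

end ContinuedFraction

lemma mul_mem_Ioo_of_mul_add_mul_eq_one {α β q q' e : ℝ} (hα : α ∈ Set.Ioc 0 1)
    (hq' : 0 < q') (hq : q' < q) (he : e ∈ Set.Ico (α - 1) α) (he0 : e ≠ 0)
    (hβ : β * (q + q' * e) = 1) : 1 / (1 + α) < β * q ∧ β * q < 1 / α := by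
  obtain ⟨hα0, hα1⟩ := hα
  obtain ⟨he1, he2⟩ := he
  have hlower : α * q < q + q' * e := by
    rcases he0.lt_or_gt with h | h
    · nlinarith
    · nlinarith [mul_pos hq' h]
  have hupper : q + q' * e < (1 + α) * q := by
    rcases le_or_gt e 0 with h | h
    · nlinarith [mul_nonpos_of_nonneg_of_nonpos hq'.le h]
    · nlinarith
  have hD : 0 < q + q' * e := by nlinarith
  rw [eq_one_div_of_mul_eq_one_left hβ, one_div_mul_eq_div]
  constructor
  · rw [div_lt_div_iff₀ (by linarith) hD]; linarith
  · rw [div_lt_div_iff₀ hD hα0]; linarith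

theorem stmt6_general (α x : ℝ) (hα : α ∈ Set.Ioc (0 : ℝ) 1) (hx : Irrational x)
    (hq : ∀ n : ℕ, 0 < qconv α x n ∧ qconv α x n < qconv α x (n + 1))
    (hex : ∀ n : ℕ, sgn α x (n + 1) * xseq α x (n + 1) ∈ Set.Ico (α - 1) α) :
    ∀ n : ℕ, 1 / (1 + α) < betaseq α x n * qconv α x (n + 1) ∧
      betaseq α x n * qconv α x (n + 1) < 1 / α := by
  intro n
  have he0 : sgn α x (n + 1) * xseq α x (n + 1) ≠ 0 := by
    rw [sgn_mul_xseq_succ]; exact ((hx.xseq n).one_div_sub_intCast _).ne_zero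
  exact mul_mem_Ioo_of_mul_add_mul_eq_one hα (hq n).1 (hq n).2 (hex n) he0
    (betaseq_mul_eq_one hx n)

/-- If `q_{α,n+1} > q_{α,n} > 0` and `ε_{α,n+1} x_{α,n+1} ∈ [α−1, α)` for all `n`,
then `1/(1+α) < β_{α,n} q_{α,n+1} < 1/α` for all `n ≥ 0`. -/
theorem stmt6 (α x : ℝ) (hα : α ∈ Set.Ioc (0 : ℝ) 1) (hx : Irrational x)
    (hdom : x ∈ Set.Ioo 0 (abar α))
    (hq : ∀ n : ℕ, 0 < qconv α x n ∧ qconv α x n < qconv α x (n + 1))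
    (hex : ∀ n : ℕ, sgn α x (n + 1) * xseq α x (n + 1) ∈ Set.Ico (α - 1) α) :
    ∀ n : ℕ, 1 / (1 + α) < betaseq α x n * qconv α x (n + 1) ∧
      betaseq α x n * qconv α x (n + 1) < 1 / α :=
  stmt6_general α x hα hx hq hex
end
end
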